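/- Assume the standing hypotheses (SH). Then the value function u is dominated by L, i.e. u(x′) − u(x) ≤ Φ^Ω_L(x,x′) for all x, x′ ∈ cl Ω; moreover u is Lipschitz continuous on cl Ω and u = g on ∂Ω. -/

import Mathlib

open MeasureTheory Filter Topology Set Metric Bornology
open scoped RealInnerProductSpace NNReal

noncomputable section

namespace HJpaper

abbrev E (n : ℕ) : Type := EuclideanSpace ℝ (Fin n)

variable {n : ℕ}

/-- A nondecreasing, nonnegative, superlinear function on `[0, ∞)`. -/
def Superlinear (θ : ℝ → ℝ) : Prop :=
  MonotoneOn θ (Ici (0 : ℝ)) ∧ (∀ r : ℝ, 0 ≤ r → 0 ≤ θ r) ∧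
    Tendsto (fun r => θ r / r) atTop atTop

/-- Tonelli Lagrangian, with the superlinearity data `θ₁ ≤ L ≤ θ₂` made explicit. -/
structure IsTonelli (L : E n → E n → ℝ) (θ₁ θ₂ : ℝ → ℝ) (c₀ : ℝ) : Prop where
  smooth : ContDiff ℝ 2 (Function.uncurry L)
  hess_pos : ∀ x v w : E n, w ≠ 0 → 0 < fderiv ℝ (fun v' => fderiv ℝ (L x) v') v w w
  sl₁ : Superlinear θ₁
  sl₂ : Superlinear θ₂
  c₀_pos : 0 < c₀
  lower : ∀ x v, θ₁ ‖v‖ - c₀ ≤ L x v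
  upper : ∀ x v, L x v ≤ θ₂ ‖v‖

/-- A `W^{1,1}` arc with values in `S`, from `x` at time `a` to `y` at time `b`,
with (a.e.) derivative `ξ'`. -/
structure ArcOn (S : Set (E n)) (a b : ℝ) (x y : E n) (ξ ξ' : ℝ → E n) : Prop where
  intg : IntervalIntegrable ξ' volume a b
  rep : ∀ t ∈ Icc a b, ξ t = x + ∫ s in a..t, ξ' s
  mem : ∀ t ∈ Icc a b, ξ t ∈ S
  start : ξ a = x
  last : ξ b = y

/-- The set of (finite) actions of arcs in `S` from `(a,x)` to `(b,y)`. -/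
def actionSet (L : E n → E n → ℝ) (S : Set (E n)) (a b : ℝ) (x y : E n) : Set ℝ :=
  {v | ∃ ξ ξ' : ℝ → E n, ArcOn S a b x y ξ ξ' ∧
    IntervalIntegrable (fun s => L (ξ s) (ξ' s)) volume a b ∧
    v = ∫ s in a..b, L (ξ s) (ξ' s)}

/-- The relative fundamental solution `A^Ω_t(x,y)`. -/
def fundSol (L : E n → E n → ℝ) (Ω : Set (E n)) (t : ℝ) (x y : E n) : ℝ :=
  sInf (actionSet L (closure Ω) 0 t x y)

/-- A minimizer, on the time interval `[a,b]`, of `A^Ω_{b-a}(x,y)`. -/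
def IsMinimizer (L : E n → E n → ℝ) (Ω : Set (E n)) (a b : ℝ) (x y : E n)
    (ξ ξ' : ℝ → E n) : Prop :=
  ArcOn (closure Ω) a b x y ξ ξ' ∧
    IntervalIntegrable (fun s => L (ξ s) (ξ' s)) volume a b ∧
    (∫ s in a..b, L (ξ s) (ξ' s)) = fundSol L Ω (b - a) x y

/-- The set `⋃_{t>0} actionSet`, whose infimum is the relative Mañé potential. -/
def phiSet (L : E n → E n → ℝ) (Ω : Set (E n)) (x y : E n) : Set ℝ :=
  {v | ∃ t : ℝ, 0 < t ∧ v ∈ actionSet L (closure Ω) 0 t x y}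

/-- The relative Mañé potential `Φ^Ω_L(x,y) = inf_{t>0} A^Ω_t(x,y)` (real-valued version). -/
def manePot (L : E n → E n → ℝ) (Ω : Set (E n)) (x y : E n) : ℝ :=
  sInf (phiSet L Ω x y)

/-- The relative Mañé potential with values in `EReal` (so the value `-∞` is meaningful). -/
def manePotE (L : E n → E n → ℝ) (Ω : Set (E n)) (x y : E n) : EReal :=
  sInf ((fun v : ℝ => (v : EReal)) '' phiSet L Ω x y)

/-- The relative Mañé critical value `c_Ω(L) = - inf { A^Ω_t(x,x)/t }`. -/
def critValue (L : E n → E n → ℝ) (Ω : Set (E n)) : ℝ :=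
  - sInf {v : ℝ | ∃ t : ℝ, 0 < t ∧ ∃ x ∈ closure Ω, v = (1 / t) * fundSol L Ω t x x}

/-- The value function `u(x) = inf_{y ∈ ∂Ω} ( g(y) + Φ^Ω_L(y,x) )`. -/
def valueFun (L : E n → E n → ℝ) (Ω : Set (E n)) (g : E n → ℝ) (x : E n) : ℝ :=
  sInf ((fun y => g y + manePot L Ω y x) '' frontier Ω)

/-- `C`-quasiconvexity of the domain `Ω`. -/
def IsQuasiconvex (C : ℝ) (Ω : Set (E n)) : Prop :=
  ∀ x ∈ closure Ω, ∀ y ∈ closure Ω, x ≠ y →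
    ∃ (T : ℝ) (ξ ξ' : ℝ → E n), 0 < T ∧ T ≤ C * ‖x - y‖ ∧
      ArcOn (closure Ω) 0 T x y ξ ξ' ∧
      ∀ᵐ s ∂(volume : Measure ℝ), s ∈ Icc 0 T → ‖ξ' s‖ = 1

/-- `∂Ω` is locally the graph of a Lipschitz function (with `Ω` locally the subgraph). -/
def HasLipschitzBoundary (Ω : Set (E n)) : Prop :=
  ∀ x ∈ frontier Ω, ∃ v : E n, ‖v‖ = 1 ∧ ∃ r : ℝ, 0 < r ∧ ∃ (K : ℝ≥0) (φ : E n → ℝ),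
    LipschitzWith K φ ∧ ∀ y ∈ ball x r, (y ∈ Ω ↔ ⟪y, v⟫ < φ (y - ⟪y, v⟫ • v))

/-- `∂Ω` is locally the graph of a `C²` function (with `Ω` locally the subgraph). -/
def HasC2Boundary (Ω : Set (E n)) : Prop :=
  ∀ x ∈ frontier Ω, ∃ v : E n, ‖v‖ = 1 ∧ ∃ r : ℝ, 0 < r ∧ ∃ φ : E n → ℝ,
    ContDiff ℝ 2 φ ∧ ∀ y ∈ ball x r, (y ∈ Ω ↔ ⟪y, v⟫ < φ (y - ⟪y, v⟫ • v))

/-- A `u`-calibrated arc in `cl Ω` from `x` at time `a` to `y` at time `b`. -/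
def CalibratedArc (L : E n → E n → ℝ) (Ω : Set (E n)) (u : E n → ℝ) (a b : ℝ)
    (x y : E n) (ξ ξ' : ℝ → E n) : Prop :=
  ArcOn (closure Ω) a b x y ξ ξ' ∧
    IntervalIntegrable (fun s => L (ξ s) (ξ' s)) volume a b ∧
    u y - u x = ∫ s in a..b, L (ξ s) (ξ' s)

/-- A `u`-calibrated curve on `(-∞,0]` ending at `x`. -/
def CalCurveInf (L : E n → E n → ℝ) (Ω : Set (E n)) (u : E n → ℝ) (x : E n)
    (ξ ξ' : ℝ → E n) : Prop :=
  ξ 0 = x ∧ ∀ a : ℝ, a < 0 → CalibratedArc L Ω u a 0 (ξ a) x ξ ξ'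

/-- The singular set of `u` in `Ω`. -/
def singSet (u : E n → ℝ) (Ω : Set (E n)) : Set (E n) :=
  {x ∈ Ω | ¬ DifferentiableAt ℝ u x}

/-- The cut locus of `u`: points of `Ω` that only occur as final points of calibrated curves. -/
def cutLocus (L : E n → E n → ℝ) (Ω : Set (E n)) (u : E n → ℝ) : Set (E n) :=
  {x ∈ Ω | ∀ (a b : ℝ) (p q : E n) (ξ ξ' : ℝ → E n), a < b →
    CalibratedArc L Ω u a b p q ξ ξ' → ∀ s ∈ Icc a b, ξ s = x → ξ b = x}

/-- All boundary hitting times of `u`-calibrated curves ending at `x`;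
its infimum is the exit time `T(x)`. -/
def exitTimeSet (L : E n → E n → ℝ) (Ω : Set (E n)) (u : E n → ℝ) (x : E n) : Set ℝ :=
  {s | 0 ≤ s ∧ ∃ ξ ξ' : ℝ → E n, ξ 0 = x ∧ ξ (-s) ∈ frontier Ω ∧
    ((∃ a : ℝ, a ≤ -s ∧ a < 0 ∧ CalibratedArc L Ω u a 0 (ξ a) x ξ ξ') ∨
      CalCurveInf L Ω u x ξ ξ')}

/-- The exit time function `T(x)`. -/
def exitTime (L : E n → E n → ℝ) (Ω : Set (E n)) (u : E n → ℝ) (x : E n) : ℝ :=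
  sInf (exitTimeSet L Ω u x)

/-- The (Dini) superdifferential `D⁺u(x)`. -/
def superDiff (u : E n → ℝ) (x : E n) : Set (E n) :=
  {p | ∀ ε : ℝ, 0 < ε → ∃ δ : ℝ, 0 < δ ∧ ∀ y : E n, ‖y - x‖ < δ →
    u y - u x - ⟪p, y - x⟫ ≤ ε * ‖y - x‖}

/-- The set `D*u(x)` of reachable (limiting) gradients of `u` at `x`. -/
def reachGrad (u : E n → ℝ) (x : E n) : Set (E n) :=
  {p | ∃ xk : ℕ → E n, (∀ k, xk k ≠ x ∧ DifferentiableAt ℝ u (xk k)) ∧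
    Tendsto xk atTop (𝓝 x) ∧ Tendsto (fun k => gradient u (xk k)) atTop (𝓝 p)}

/-- The Hamiltonian associated with `L`: `H(x,p) = sup_v (⟨p,v⟩ - L(x,v))`. -/
def Ham (L : E n → E n → ℝ) (x p : E n) : ℝ :=
  sSup (Set.range fun v : E n => ⟪p, v⟫ - L x v)

/-- Semiconcavity (with linear modulus) with constant `C` on `S`. -/
def SemiconcaveWith (S : Set (E n)) (f : E n → ℝ) (C : ℝ) : Prop :=
  ∀ x ∈ S, ∀ y ∈ S, segment ℝ x y ⊆ S → ∀ l : ℝ, l ∈ Icc (0 : ℝ) 1 →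
    l * f x + (1 - l) * f y - f (l • x + (1 - l) • y) ≤ C / 2 * (l * (1 - l)) * ‖x - y‖ ^ 2

/-- Local semiconcavity on an open set `S`. -/
def LocallySemiconcaveOn (S : Set (E n)) (f : E n → ℝ) : Prop :=
  ∀ x ∈ S, ∃ r : ℝ, 0 < r ∧ ball x r ⊆ S ∧ ∃ C : ℝ, SemiconcaveWith (ball x r) f C

/-- `C^{1,1}_loc` regularity on `S`: differentiable with locally Lipschitz gradient. -/
def C11On (S : Set (E n)) (f : E n → ℝ) : Prop :=
  (∀ y ∈ S, DifferentiableAt ℝ f y) ∧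
    ∀ y ∈ S, ∃ r : ℝ, 0 < r ∧ ∃ M : ℝ≥0,
      LipschitzOnWith M (fun z => gradient f z) (ball y r ∩ S)

/-- The Legendre transform `θ*(k) = sup_{r ≥ 0} (k r - θ(r))`. -/
def legendre (θ : ℝ → ℝ) (k : ℝ) : ℝ :=
  sSup {v : ℝ | ∃ r : ℝ, 0 ≤ r ∧ v = k * r - θ r}

/-- A generalized characteristic of `H(x,Du)=0` on the time set `I`:
a Lipschitz arc in `Ω` with `γ'(s) ∈ co H_p(γ(s), D⁺u(γ(s)))` a.e. -/
def GenChar (L : E n → E n → ℝ) (Ω : Set (E n)) (u : E n → ℝ) (I : Set ℝ)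
    (γ : ℝ → E n) : Prop :=
  (∀ s ∈ I, γ s ∈ Ω) ∧ (∃ K : ℝ≥0, LipschitzOnWith K γ I) ∧
    ∀ᵐ s ∂(volume.restrict I), ∃ v : E n, HasDerivWithinAt γ v I s ∧
      v ∈ convexHull ℝ ((fun p => gradient (Ham L (γ s)) p) '' superDiff u (γ s))

/-!
A Lipschitz domain is quasiconvex: near a boundary point `Ω` is the strict subgraph of a
Lipschitz function, so two nearby points are joined inside `cl Ω` by going down, across and back
up, in time comparable to their distance; compactness and connectedness of `cl Ω` make this
global. A unit-speed arc costs at most `θ₂ 1` per unit of time, so `Φ(x, y) ≤ θ₂(1) C |x - y|`.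
Since `c_Ω(L) ≤ 0`, closed loops have nonnegative action; this keeps `Φ` finite, so it vanishes
on the diagonal and, by concatenation of arcs, satisfies the triangle inequality. The value
function is the inf-convolution of `g` with `Φ`: the triangle inequality gives domination, hence
the Lipschitz bound, and the compatibility condition gives `u = g` on `∂Ω`.
-/

section Concatenation

def glue {F : Type*} (a : ℝ) (f g : ℝ → F) : ℝ → F := fun s => if s ≤ a then f s else g (s - a)

variable {F : Type*} {a b t : ℝ} {f g : ℝ → F}

lemma glue_of_le (h : t ≤ a) : glue a f g t = f t := if_pos h

lemma glue_of_lt (h : a < t) : glue a f g t = g (t - a) := if_neg h.not_ge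

lemma glue_map₂ {G H : Type*} (Φ : F → G → H) (f' g' : ℝ → G) :
    (fun s => Φ (glue a f g s) (glue a f' g' s)) =
      glue a (fun s => Φ (f s) (f' s)) (fun s => Φ (g s) (g' s)) := by
  funext s
  by_cases h : s ≤ a <;> simp [glue, h]

variable [NormedAddCommGroup F]

lemma intervalIntegrable_glue_left (ha : 0 ≤ a) (hf : IntervalIntegrable f volume 0 a) :
    IntervalIntegrable (glue a f g) volume 0 a :=
  hf.congr fun _ hs => (glue_of_le (uIoc_of_le ha ▸ hs).2).symm

lemma intervalIntegrable_glue_right (hb : 0 ≤ b) (hg : IntervalIntegrable g volume 0 b) :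
    IntervalIntegrable (glue a f g) volume a (a + b) := by
  have hshift : IntervalIntegrable (fun s => g (s - a)) volume a (a + b) := by
    simpa [add_comm] using hg.comp_sub_right a
  exact hshift.congr fun _ hs =>
    (glue_of_lt (uIoc_of_le (le_add_of_nonneg_right hb) ▸ hs).1).symm

lemma intervalIntegrable_glue (ha : 0 ≤ a) (hb : 0 ≤ b) (hf : IntervalIntegrable f volume 0 a)
    (hg : IntervalIntegrable g volume 0 b) : IntervalIntegrable (glue a f g) volume 0 (a + b) :=
  (intervalIntegrable_glue_left ha hf).trans (intervalIntegrable_glue_right hb hg)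

variable [NormedSpace ℝ F]

lemma integral_glue_of_le (ht₀ : 0 ≤ t) (ht : t ≤ a) :
    ∫ s in (0 : ℝ)..t, glue a f g s = ∫ s in (0 : ℝ)..t, f s :=
  intervalIntegral.integral_congr fun _ hs => glue_of_le ((uIcc_of_le ht₀ ▸ hs).2.trans ht)

lemma integral_glue_of_ge (ha : 0 ≤ a) (ht : a ≤ t) (htb : t ≤ a + b)
    (hf : IntervalIntegrable f volume 0 a) (hg : IntervalIntegrable g volume 0 b) :
    ∫ s in (0 : ℝ)..t, glue a f g s = (∫ s in (0 : ℝ)..a, f s) + ∫ s in (0 : ℝ)..(t - a), g s := by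
  have hright : IntervalIntegrable (glue a f g) volume a t :=
    (intervalIntegrable_glue_right (by linarith) hg).mono_set <| uIcc_subset_uIcc left_mem_uIcc
      (mem_uIcc_of_le ht htb)
  rw [← intervalIntegral.integral_add_adjacent_intervals (intervalIntegrable_glue_left ha hf)
    hright, integral_glue_of_le ha le_rfl]
  congr 1
  rw [intervalIntegral.integral_congr_ae (g := fun s => g (s - a))
      (Eventually.of_forall fun _ hs => glue_of_lt (uIoc_of_le ht ▸ hs).1),
    intervalIntegral.integral_comp_sub_right, sub_self]

end Concatenation

section Arcs

variable {S : Set (E n)} {a b T : ℝ} {x y z : E n} {ξ ξ' η η' : ℝ → E n}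

lemma ArcOn.sub_eq_integral (h : ArcOn S a b x y ξ ξ') {s t : ℝ} (hs : s ∈ Icc a b)
    (ht : t ∈ Icc a b) : ξ t - ξ s = ∫ r in s..t, ξ' r := by
  have hsub : ∀ r ∈ Icc a b, uIcc a r ⊆ uIcc a b := fun r hr =>
    uIcc_subset_uIcc left_mem_uIcc (Icc_subset_uIcc hr)
  rw [h.rep t ht, h.rep s hs, add_sub_add_left_eq_sub,
    intervalIntegral.integral_interval_sub_left (h.intg.mono_set (hsub t ht))
      (h.intg.mono_set (hsub s hs))]

lemma ArcOn.continuousOn (h : ArcOn S a b x y ξ ξ') (hab : a ≤ b) : ContinuousOn ξ (Icc a b) := by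
  have hprim := (continuousOn_const (c := x)).add
    (intervalIntegral.continuousOn_primitive_interval' h.intg left_mem_uIcc)
  rw [uIcc_of_le hab] at hprim
  exact hprim.congr h.rep

lemma ArcOn.append (ha : 0 ≤ a) (hb : 0 ≤ b) (h₁ : ArcOn S 0 a x y ξ ξ')
    (h₂ : ArcOn S 0 b y z η η') : ArcOn S 0 (a + b) x z (glue a ξ η) (glue a ξ' η') where
  intg := intervalIntegrable_glue ha hb h₁.intg h₂.intg
  rep t ht := by
    rcases le_or_gt t a with hta | hta
    · rw [glue_of_le hta, integral_glue_of_le ht.1 hta, h₁.rep t ⟨ht.1, hta⟩]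
    · have hy : ∫ s in (0 : ℝ)..a, ξ' s = y - x := by
        rw [← h₁.sub_eq_integral ⟨le_rfl, ha⟩ ⟨ha, le_rfl⟩, h₁.last, h₁.start]
      rw [glue_of_lt hta, integral_glue_of_ge ha hta.le ht.2 h₁.intg h₂.intg, hy,
        h₂.rep (t - a) ⟨by linarith, by linarith [ht.2]⟩]
      abel
  mem t ht := by
    rcases le_or_gt t a with hta | hta
    · rw [glue_of_le hta]; exact h₁.mem t ⟨ht.1, hta⟩
    · rw [glue_of_lt hta]; exact h₂.mem (t - a) ⟨by linarith, by linarith [ht.2]⟩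
  start := by rw [glue_of_le ha, h₁.start]
  last := by
    rcases hb.eq_or_lt with rfl | hb
    · rw [add_zero, glue_of_le le_rfl, h₁.last, ← h₂.last, h₂.start]
    · rw [glue_of_lt (by linarith), add_sub_cancel_left, h₂.last]

lemma ArcOn.reverse (hT : 0 ≤ T) (h : ArcOn S 0 T x y ξ ξ') :
    ArcOn S 0 T y x (fun s => ξ (T - s)) (fun s => -ξ' (T - s)) where
  intg := by
    have := (h.intg.comp_sub_left T).symm
    simp only [sub_self, sub_zero] at this
    exact this.neg
  rep t ht := by
    have hTt : T - t ∈ Icc 0 T := ⟨by linarith [ht.2], by linarith [ht.1]⟩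
    rw [intervalIntegral.integral_neg, intervalIntegral.integral_comp_sub_left, sub_zero,
      ← h.sub_eq_integral hTt ⟨hT, le_rfl⟩, h.last]
    abel
  mem t ht := h.mem (T - t) ⟨by linarith [ht.2], by linarith [ht.1]⟩
  start := by simpa using h.last
  last := by simpa using h.start

variable {L : E n → E n → ℝ}

lemma actionSet_add (ha : 0 ≤ a) (hb : 0 ≤ b) {A B : ℝ} (hA : A ∈ actionSet L S 0 a x y)
    (hB : B ∈ actionSet L S 0 b y z) : A + B ∈ actionSet L S 0 (a + b) x z := by
  obtain ⟨ξ, ξ', h₁, hi₁, rfl⟩ := hA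
  obtain ⟨η, η', h₂, hi₂, rfl⟩ := hB
  refine ⟨glue a ξ η, glue a ξ' η', h₁.append ha hb h₂, ?_, ?_⟩ <;> rw [glue_map₂ L]
  · exact intervalIntegrable_glue ha hb hi₁ hi₂
  · rw [integral_glue_of_ge ha (by linarith) le_rfl hi₁ hi₂, add_sub_cancel_left]

end Arcs

section UnitSpeedJoin

variable {S : Set (E n)} {x y z : E n} {T T' : ℝ}

/-- The arcs of `IsQuasiconvex`. For `T < 0` the conditions of `ArcOn` only constrain
`ξ 0 = x` and `ξ T = y`, hence the requirement `0 ≤ T`. -/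
def UnitSpeedJoin (S : Set (E n)) (x y : E n) (T : ℝ) : Prop :=
  0 ≤ T ∧ ∃ ξ ξ' : ℝ → E n, ArcOn S 0 T x y ξ ξ' ∧
    ∀ᵐ s ∂(volume : Measure ℝ), s ∈ Icc 0 T → ‖ξ' s‖ = 1

lemma UnitSpeedJoin.refl (hx : x ∈ S) : UnitSpeedJoin S x x 0 := by
  refine ⟨le_rfl, fun _ => x, fun _ => 0, ⟨intervalIntegrable_const, fun _ _ => by simp,
    fun _ _ => hx, rfl, rfl⟩, ?_⟩
  filter_upwards [volume.ae_ne 0] with s hs hs0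
  exact absurd (le_antisymm hs0.2 hs0.1) hs

lemma UnitSpeedJoin.pos (h : UnitSpeedJoin S x y T) (hxy : x ≠ y) : 0 < T := by
  obtain ⟨hT, ξ, ξ', harc, -⟩ := h
  refine hT.lt_of_ne fun hT0 => hxy ?_
  rw [← harc.start, ← harc.last, ← hT0]

lemma UnitSpeedJoin.trans (h₁ : UnitSpeedJoin S x y T) (h₂ : UnitSpeedJoin S y z T') :
    UnitSpeedJoin S x z (T + T') := by
  obtain ⟨hT, ξ, ξ', harc₁, hunit₁⟩ := h₁
  obtain ⟨hT', η, η', harc₂, hunit₂⟩ := h₂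
  refine ⟨add_nonneg hT hT', _, _, harc₁.append hT hT' harc₂, ?_⟩
  filter_upwards [hunit₁, (measurePreserving_sub_right volume T).quasiMeasurePreserving.ae hunit₂]
    with s hs₁ hs₂ hs
  rcases le_or_gt s T with hsT | hsT
  · rw [glue_of_le hsT]; exact hs₁ ⟨hs.1, hsT⟩
  · rw [glue_of_lt hsT]; exact hs₂ ⟨by linarith, by linarith [hs.2]⟩

lemma UnitSpeedJoin.symm (h : UnitSpeedJoin S x y T) : UnitSpeedJoin S y x T := by
  obtain ⟨hT, ξ, ξ', harc, hunit⟩ := h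
  refine ⟨hT, _, _, harc.reverse hT, ?_⟩
  filter_upwards [(volume.measurePreserving_sub_left T).quasiMeasurePreserving.ae hunit]
    with s hs hsT
  rw [norm_neg]
  exact hs ⟨by linarith [hsT.2], by linarith [hsT.1]⟩

lemma unitSpeedJoin_segment (h : ∀ t ∈ Icc (0 : ℝ) 1, x + t • (y - x) ∈ S) :
    UnitSpeedJoin S x y ‖y - x‖ := by
  rcases eq_or_ne x y with rfl | hxy
  · simpa using UnitSpeedJoin.refl (by simpa using h 0 ⟨le_rfl, zero_le_one⟩)
  have hd : 0 < ‖y - x‖ := norm_pos_iff.2 (sub_ne_zero.2 hxy.symm)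
  refine ⟨hd.le, fun s => x + (s / ‖y - x‖) • (y - x), fun _ => ‖y - x‖⁻¹ • (y - x),
    ⟨intervalIntegrable_const, fun t _ => ?_, fun t ht => h _ ⟨?_, ?_⟩, by simp, ?_⟩,
    Eventually.of_forall fun _ _ => ?_⟩
  · rw [intervalIntegral.integral_const, sub_zero, smul_smul, div_eq_mul_inv]
  · exact div_nonneg ht.1 hd.le
  · exact (div_le_one hd).2 ht.2
  · rw [div_self hd.ne', one_smul, add_sub_cancel]
  · rw [norm_smul, norm_inv, norm_norm, inv_mul_cancel₀ hd.ne']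

end UnitSpeedJoin

section Quasiconvexity

variable {Ω : Set (E n)}

lemma norm_sub_inner_smul_le {v : E n} (hv : ‖v‖ = 1) (p : E n) : ‖p - ⟪p, v⟫ • v‖ ≤ ‖p‖ := by
  have hsq : ‖p - ⟪p, v⟫ • v‖ ^ 2 = ‖p‖ ^ 2 - ⟪p, v⟫ ^ 2 := by
    rw [norm_sub_sq_real, real_inner_smul_right, norm_smul, hv, mul_one, Real.norm_eq_abs,
      sq_abs]
    ring
  exact (sq_le_sq₀ (norm_nonneg _) (norm_nonneg _)).1 (by rw [hsq]; linarith [sq_nonneg ⟪p, v⟫])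

lemma nonpos_of_mem_closure {X : Type*} [TopologicalSpace X] {U Ω : Set X} {F : X → ℝ}
    (hF : Continuous F) (hU : IsOpen U) (hΩ : ∀ w ∈ U, w ∈ Ω ↔ F w < 0) {w : X}
    (hw : w ∈ closure Ω ∩ U) : F w ≤ 0 :=
  closure_minimal (fun u hu => ((hΩ u hu.1).1 hu.2).le) (isClosed_le hF continuous_const)
    (hU.inter_closure ⟨hw.2, hw.1⟩)

section Sublevel

variable {F : E n → ℝ} {K : ℝ≥0} {v x₀ y z : E n} {r ρ d : ℝ}

lemma sub_smul_mem_of_lt (hFv : ∀ w (τ : ℝ), F (w - τ • v) = F w - τ)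
    (hΩ : ∀ w ∈ ball x₀ r, w ∈ Ω ↔ F w < 0) (hv : ‖v‖ = 1) {w : E n} {τ : ℝ} (hτ : 0 ≤ τ)
    (hwτ : dist w x₀ + τ < r) (hFw : F w < τ) : w - τ • v ∈ Ω := by
  refine (hΩ _ ?_).2 (by rw [hFv]; linarith)
  calc dist (w - τ • v) x₀ ≤ dist (w - τ • v) w + dist w x₀ := dist_triangle _ _ _
    _ < r := by rw [dist_self_sub_left, norm_smul, hv, mul_one, Real.norm_of_nonneg hτ]; linarith

lemma unitSpeedJoin_sub_smul (hF : Continuous F) (hFv : ∀ w (τ : ℝ), F (w - τ • v) = F w - τ)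
    (hΩ : ∀ w ∈ ball x₀ r, w ∈ Ω ↔ F w < 0) (hv : ‖v‖ = 1) (hy : y ∈ closure Ω ∩ ball x₀ ρ)
    (hd : 0 ≤ d) (hρd : ρ + d ≤ r) : UnitSpeedJoin (closure Ω) y (y - d • v) d := by
  have hy₀ : dist y x₀ < ρ := hy.2
  have hFy : F y ≤ 0 :=
    nonpos_of_mem_closure hF isOpen_ball hΩ ⟨hy.1, mem_ball.2 (by linarith)⟩
  have hseg : ∀ t ∈ Icc (0 : ℝ) 1, y + t • (y - d • v - y) ∈ closure Ω := by
    intro t ht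
    rw [show y + t • (y - d • v - y) = y - (t * d) • v by module]
    rcases (mul_nonneg ht.1 hd).eq_or_lt with h0 | hpos
    · rw [← h0, zero_smul, sub_zero]; exact hy.1
    · exact subset_closure (sub_smul_mem_of_lt hFv hΩ hv hpos.le (by nlinarith [ht.2])
        (hFy.trans_lt hpos))
  convert unitSpeedJoin_segment hseg using 1
  simp [norm_smul, hv, abs_of_nonneg hd]

lemma unitSpeedJoin_sub_smul_segment (hF : LipschitzWith K F)
    (hFv : ∀ w (τ : ℝ), F (w - τ • v) = F w - τ) (hΩ : ∀ w ∈ ball x₀ r, w ∈ Ω ↔ F w < 0)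
    (hv : ‖v‖ = 1) (hy : y ∈ closure Ω ∩ ball x₀ ρ) (hz : z ∈ ball x₀ ρ)
    (hd : K * ‖y - z‖ < d) (hρd : ρ + d ≤ r) :
    UnitSpeedJoin (closure Ω) (y - d • v) (z - d • v) ‖y - z‖ := by
  have hd₀ : 0 ≤ d := (mul_nonneg K.coe_nonneg (norm_nonneg _)).trans hd.le
  have hFy : F y ≤ 0 :=
    nonpos_of_mem_closure hF.continuous isOpen_ball hΩ ⟨hy.1, ball_subset_ball (by linarith) hy.2⟩
  have hseg : ∀ t ∈ Icc (0 : ℝ) 1, y - d • v + t • (z - d • v - (y - d • v)) ∈ closure Ω := by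
    intro t ht
    rw [show y - d • v + t • (z - d • v - (y - d • v)) = y + t • (z - y) - d • v by module]
    have hw : dist (y + t • (z - y)) x₀ < ρ := (convex_ball x₀ ρ).add_smul_sub_mem hy.2 hz ht
    have hlip := (le_abs_self _).trans (hF.dist_le_mul (y + t • (z - y)) y)
    rw [dist_eq_norm, add_sub_cancel_left, norm_smul, Real.norm_of_nonneg ht.1,
      norm_sub_rev] at hlip
    have hKt := mul_le_mul_of_nonneg_left (mul_le_of_le_one_left (norm_nonneg (y - z)) ht.2)
      K.coe_nonneg
    exact subset_closure (sub_smul_mem_of_lt hFv hΩ hv hd₀ (by linarith) (by linarith))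
  convert unitSpeedJoin_segment hseg using 1
  rw [sub_sub_sub_cancel_right, norm_sub_rev]

/-- The path `y → y - d • v → z - d • v → z` with `d = (K + 1) ‖y - z‖`: pushing down along `v`
lowers `F` at unit rate, which beats the growth `K ‖y - z‖` of `F` along `[y, z]`. -/
lemma unitSpeedJoin_of_sublevel (hF : LipschitzWith K F)
    (hFv : ∀ w (τ : ℝ), F (w - τ • v) = F w - τ) (hΩ : ∀ w ∈ ball x₀ r, w ∈ Ω ↔ F w < 0)
    (hv : ‖v‖ = 1) (hy : y ∈ closure Ω ∩ ball x₀ (r / (2 * K + 3)))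
    (hz : z ∈ closure Ω ∩ ball x₀ (r / (2 * K + 3))) :
    UnitSpeedJoin (closure Ω) y z ((2 * K + 3) * ‖y - z‖) := by
  rcases eq_or_ne y z with rfl | hyz
  · simpa using UnitSpeedJoin.refl hy.1
  set ρ := r / (2 * K + 3) with hρ
  have hr : r = (2 * K + 3) * ρ := by rw [hρ]; field_simp
  have hyz_pos : 0 < ‖y - z‖ := norm_pos_iff.2 (sub_ne_zero.2 hyz)
  have hyz_lt : ‖y - z‖ < 2 * ρ := by
    rw [← dist_eq_norm]
    linarith [dist_triangle_right y z x₀, mem_ball.1 hy.2, mem_ball.1 hz.2]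
  have hρd : ρ + (K + 1) * ‖y - z‖ ≤ r := by nlinarith [K.coe_nonneg]
  have hd : 0 ≤ (K + 1 : ℝ) * ‖y - z‖ := by positivity
  convert ((unitSpeedJoin_sub_smul hF.continuous hFv hΩ hv hy hd hρd).trans
    (unitSpeedJoin_sub_smul_segment hF hFv hΩ hv hy hz.2 (by linarith) hρd)).trans
    (unitSpeedJoin_sub_smul hF.continuous hFv hΩ hv hz hd hρd).symm using 1
  ring

end Sublevel

lemma HasLipschitzBoundary.exists_sublevel (hΩl : HasLipschitzBoundary Ω) {x : E n}
    (hx : x ∈ frontier Ω) :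
    ∃ (v : E n) (r : ℝ) (K : ℝ≥0) (F : E n → ℝ), ‖v‖ = 1 ∧ 0 < r ∧ LipschitzWith K F ∧
      (∀ w (τ : ℝ), F (w - τ • v) = F w - τ) ∧ ∀ w ∈ ball x r, (w ∈ Ω ↔ F w < 0) := by
  obtain ⟨v, hv, r, hr, K, φ, hφ, hΩ⟩ := hΩl x hx
  have hvv : ⟪v, v⟫ = 1 := by rw [real_inner_self_eq_norm_sq, hv, one_pow]
  have hinner : LipschitzWith 1 fun w : E n => ⟪w, v⟫ := by
    refine LipschitzWith.of_dist_le_mul fun a b => ?_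
    rw [Real.dist_eq, ← inner_sub_left, dist_eq_norm, NNReal.coe_one, one_mul]
    exact (abs_real_inner_le_norm _ _).trans (by rw [hv, mul_one])
  have hproj : LipschitzWith 1 fun w : E n => w - ⟪w, v⟫ • v := by
    refine LipschitzWith.of_dist_le_mul fun a b => ?_
    rw [dist_eq_norm, dist_eq_norm, NNReal.coe_one, one_mul,
      show a - ⟪a, v⟫ • v - (b - ⟪b, v⟫ • v) = (a - b) - ⟪a - b, v⟫ • v by
        rw [inner_sub_left, sub_smul]; abel]
    exact norm_sub_inner_smul_le hv _
  refine ⟨v, r, _, fun w => ⟪w, v⟫ - φ (w - ⟪w, v⟫ • v), hv, hr, hinner.sub (hφ.comp hproj),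
    fun w τ => ?_, fun w hw => by rw [hΩ w hw, sub_neg]⟩
  have hproj_eq : w - τ • v - ⟪w - τ • v, v⟫ • v = w - ⟪w, v⟫ • v := by
    rw [inner_sub_left, real_inner_smul_left, hvv, mul_one, sub_smul]; abel
  dsimp only
  rw [hproj_eq, inner_sub_left, real_inner_smul_left, hvv, mul_one]
  ring

lemma exists_unitSpeedJoin_near (hΩo : IsOpen Ω) (hΩl : HasLipschitzBoundary Ω) {p : E n}
    (hp : p ∈ closure Ω) : ∃ r > 0, ∃ C : ℝ, ∀ y ∈ closure Ω ∩ ball p r,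
      ∀ z ∈ closure Ω ∩ ball p r, UnitSpeedJoin (closure Ω) y z (C * ‖y - z‖) := by
  rw [closure_eq_self_union_frontier] at hp
  rcases hp with hp | hp
  · obtain ⟨r, hr, hball⟩ := Metric.isOpen_iff.1 hΩo p hp
    refine ⟨r, hr, 1, fun y hy z hz => ?_⟩
    rw [one_mul, norm_sub_rev]
    exact unitSpeedJoin_segment fun t ht =>
      subset_closure (hball ((convex_ball p r).add_smul_sub_mem hy.2 hz.2 ht))
  · obtain ⟨v, r, K, F, hv, hr, hF, hFv, hΩ⟩ := hΩl.exists_sublevel hp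
    exact ⟨r / (2 * K + 3), by positivity, 2 * K + 3, fun y hy z hz =>
      unitSpeedJoin_of_sublevel hF hFv hΩ hv hy hz⟩

section CompactSet

variable {K : Set (E n)}

lemma exists_unitSpeedJoin_of_dist_lt (hK : IsCompact K)
    (hloc : ∀ p ∈ K, ∃ r > 0, ∃ C : ℝ, ∀ y ∈ K ∩ ball p r, ∀ z ∈ K ∩ ball p r,
      UnitSpeedJoin K y z (C * ‖y - z‖)) :
    ∃ δ > 0, ∃ C ≥ 0, ∀ y ∈ K, ∀ z ∈ K, ‖y - z‖ < δ → ∃ T ≤ C * ‖y - z‖, UnitSpeedJoin K y z T := by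
  choose! r hr C hC using hloc
  obtain ⟨t, htK, hcover⟩ := hK.elim_nhds_subcover (fun p => ball p (r p))
    fun p hp => ball_mem_nhds p (hr p hp)
  obtain ⟨δ, hδ, hleb⟩ := lebesgue_number_lemma_of_metric hK (c := fun p : t => ball p.1 (r p))
    (fun _ => isOpen_ball) fun q hq => by
      obtain ⟨p, hpt, hqp⟩ := mem_iUnion₂.1 (hcover hq)
      exact mem_iUnion.2 ⟨⟨p, hpt⟩, hqp⟩
  obtain ⟨M, hM⟩ := (t.image C).exists_le
  refine ⟨δ, hδ, max M 0, le_max_right _ _, fun y hy z hz hyz => ?_⟩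
  obtain ⟨⟨p, hpt⟩, hball⟩ := hleb y hy
  have hCp : C p ≤ max M 0 := (hM _ (Finset.mem_image_of_mem C hpt)).trans (le_max_left _ _)
  refine ⟨_, ?_, hC p (htK p hpt) y ⟨hy, hball (mem_ball_self hδ)⟩ z
    ⟨hz, hball (by rwa [mem_ball, dist_eq_norm, norm_sub_rev])⟩⟩
  exact mul_le_mul_of_nonneg_right hCp (norm_nonneg _)

lemma exists_unitSpeedJoin_of_isPreconnected (hK : IsPreconnected K) {δ : ℝ} (hδ : 0 < δ)
    (hloc : ∀ y ∈ K, ∀ z ∈ K, ‖y - z‖ < δ → ∃ T, UnitSpeedJoin K y z T) {y z : E n}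
    (hy : y ∈ K) (hz : z ∈ K) : ∃ T, UnitSpeedJoin K y z T := by
  refine hK.induction₂' (fun y z => ∃ T, UnitSpeedJoin K y z T) (fun y hy => ?_)
    (fun _ _ _ _ _ _ ⟨T, hJ⟩ ⟨T', hJ'⟩ => ⟨T + T', hJ.trans hJ'⟩) hy hz
  filter_upwards [inter_mem_nhdsWithin K (ball_mem_nhds y hδ), self_mem_nhdsWithin]
    with z hz hzK
  obtain ⟨T, hJ⟩ := hloc y hy z hzK (by rw [norm_sub_rev, ← dist_eq_norm]; exact hz.2)
  exact ⟨⟨T, hJ⟩, ⟨T, hJ.symm⟩⟩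

/-- Join every point to a fixed `x₀` through a point of a finite `δ`-net of `K`. -/
lemma exists_unitSpeedJoin_le (hK : IsCompact K) (hKc : IsPreconnected K)
    {x₀ : E n} (hx₀ : x₀ ∈ K) {δ C : ℝ} (hδ : 0 < δ) (hC : 0 ≤ C)
    (hloc : ∀ y ∈ K, ∀ z ∈ K, ‖y - z‖ < δ → ∃ T ≤ C * ‖y - z‖, UnitSpeedJoin K y z T) :
    ∃ D, ∀ y ∈ K, ∀ z ∈ K, ∃ T ≤ D, UnitSpeedJoin K y z T := by
  have hnear : ∀ y ∈ K, ∀ z ∈ K, ‖y - z‖ < δ → ∃ T ≤ C * δ, UnitSpeedJoin K y z T :=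
    fun y hy z hz hyz => by
      obtain ⟨T, hT, hJ⟩ := hloc y hy z hz hyz
      exact ⟨T, hT.trans (mul_le_mul_of_nonneg_left hyz.le hC), hJ⟩
  choose! T hT using fun y (hy : y ∈ K) => exists_unitSpeedJoin_of_isPreconnected hKc hδ
    (fun y hy z hz hyz => (hnear y hy z hz hyz).imp fun _ => And.right) hx₀ hy
  obtain ⟨t, htK, ht, hcover⟩ := hK.finite_cover_balls hδ
  obtain ⟨R, hR⟩ := (ht.image T).bddAbove
  have hfrom : ∀ y ∈ K, ∃ T' ≤ R + C * δ, UnitSpeedJoin K x₀ y T' := by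
    intro y hy
    obtain ⟨p, hpt, hyp⟩ := mem_iUnion₂.1 (hcover hy)
    obtain ⟨T', hT', hJ⟩ := hnear p (htK hpt) y hy (by rwa [← dist_eq_norm, dist_comm])
    exact ⟨T p + T', add_le_add (hR (mem_image_of_mem T hpt)) hT', (hT p (htK hpt)).trans hJ⟩
  refine ⟨2 * (R + C * δ), fun y hy z hz => ?_⟩
  obtain ⟨T₁, hT₁, hJ₁⟩ := hfrom y hy
  obtain ⟨T₂, hT₂, hJ₂⟩ := hfrom z hz
  exact ⟨T₁ + T₂, by linarith, hJ₁.symm.trans hJ₂⟩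

end CompactSet

theorem HasLipschitzBoundary.exists_isQuasiconvex (hΩo : IsOpen Ω) (hΩc : IsConnected Ω)
    (hΩb : IsBounded Ω) (hΩl : HasLipschitzBoundary Ω) : ∃ C, IsQuasiconvex C Ω := by
  have hK : IsCompact (closure Ω) := hΩb.isCompact_closure
  obtain ⟨δ, hδ, C, hC, hloc⟩ := exists_unitSpeedJoin_of_dist_lt hK
    fun p hp => exists_unitSpeedJoin_near hΩo hΩl hp
  obtain ⟨x₀, hx₀⟩ := hΩc.nonempty
  obtain ⟨D, hD⟩ := exists_unitSpeedJoin_le hK hΩc.isPreconnected.closure (subset_closure hx₀)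
    hδ hC hloc
  refine ⟨max C (D / δ), fun y hy z hz hyz => ?_⟩
  obtain ⟨T, hTle, hJ⟩ : ∃ T ≤ max C (D / δ) * ‖y - z‖, UnitSpeedJoin (closure Ω) y z T := by
    rcases lt_or_ge ‖y - z‖ δ with hnear | hfar
    · obtain ⟨T, hT, hJ⟩ := hloc y hy z hz hnear
      exact ⟨T, hT.trans (mul_le_mul_of_nonneg_right (le_max_left _ _) (norm_nonneg _)), hJ⟩
    · obtain ⟨T, hT, hJ⟩ := hD y hy z hz
      refine ⟨T, ?_, hJ⟩
      calc T ≤ D / δ * δ := by rw [div_mul_cancel₀ _ hδ.ne']; exact hT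
        _ ≤ D / δ * ‖y - z‖ :=
          mul_le_mul_of_nonneg_left hfar (div_nonneg (hJ.1.trans hT) hδ.le)
        _ ≤ max C (D / δ) * ‖y - z‖ :=
          mul_le_mul_of_nonneg_right (le_max_right _ _) (norm_nonneg _)
  obtain ⟨-, ξ, ξ', harc, hunit⟩ := id hJ
  exact ⟨T, ξ, ξ', hJ.pos hyz, hTle, harc, hunit⟩

end Quasiconvexity

lemma subsingleton_of_frontier_eq_empty {F : Type*} [NormedAddCommGroup F] [NormedSpace ℝ F]
    {Ω : Set F} (hb : IsBounded Ω) (hne : Ω.Nonempty) (h : frontier Ω = ∅) : Subsingleton F := by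
  by_contra hF
  have : Nontrivial F := not_subsingleton_iff_nontrivial.1 hF
  rcases frontier_eq_empty_iff.1 h with rfl | rfl
  · exact hne.ne_empty rfl
  · exact NormedSpace.unbounded_univ ℝ F hb

section Action

variable {L : E n → E n → ℝ} {θ₁ θ₂ : ℝ → ℝ} {c₀ : ℝ} {S : Set (E n)} {Ω : Set (E n)}
  {a b t T : ℝ} {x y : E n}

lemma le_of_mem_actionSet {m : ℝ} (hm : ∀ x v, m ≤ L x v) (hab : a ≤ b) {A : ℝ}
    (hA : A ∈ actionSet L S a b x y) : m * (b - a) ≤ A := by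
  obtain ⟨ξ, ξ', -, hint, rfl⟩ := hA
  calc m * (b - a) = ∫ _ in a..b, m := by simp [mul_comm]
    _ ≤ ∫ s in a..b, L (ξ s) (ξ' s) :=
      intervalIntegral.integral_mono_on hab intervalIntegrable_const hint fun _ _ => hm _ _

lemma IsTonelli.neg_le (hL : IsTonelli L θ₁ θ₂ c₀) (x v : E n) : -c₀ ≤ L x v := by
  linarith [hL.lower x v, hL.sl₁.2.1 ‖v‖ (norm_nonneg v)]

lemma IsTonelli.bddBelow_actionSet (hL : IsTonelli L θ₁ θ₂ c₀) (hab : a ≤ b) :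
    BddBelow (actionSet L S a b x y) :=
  ⟨_, fun _ => le_of_mem_actionSet hL.neg_le hab⟩

lemma IsTonelli.exists_mem_actionSet_le (hL : IsTonelli L θ₁ θ₂ c₀)
    (hJ : UnitSpeedJoin S x y T) : ∃ A ∈ actionSet L S 0 T x y, A ≤ θ₂ 1 * T := by
  obtain ⟨hT, ξ, ξ', harc, hunit⟩ := hJ
  have hle : ∀ᵐ s ∂volume.restrict (Icc 0 T), L (ξ s) (ξ' s) ≤ θ₂ 1 := by
    rw [ae_restrict_iff' measurableSet_Icc]
    filter_upwards [hunit] with s hs hsT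
    exact hs hsT ▸ hL.upper (ξ s) (ξ' s)
  have hmeas : AEStronglyMeasurable (fun s => L (ξ s) (ξ' s)) (volume.restrict (Icc 0 T)) :=
    hL.smooth.continuous.comp_aestronglyMeasurable
      (((harc.continuousOn hT).aestronglyMeasurable measurableSet_Icc).prodMk
        (harc.intg.1.1.mono_measure (Measure.restrict_congr_set Ioc_ae_eq_Icc).ge))
  have hint : IntervalIntegrable (fun s => L (ξ s) (ξ' s)) volume 0 T := by
    refine (intervalIntegrable_iff_integrableOn_Icc_of_le hT).2
      (Integrable.mono' (integrableOn_const (C := max c₀ (θ₂ 1)) measure_Icc_lt_top.ne)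
        hmeas ?_)
    filter_upwards [hle] with s hs
    rw [Real.norm_eq_abs, abs_le]
    constructor <;> linarith [hL.neg_le (ξ s) (ξ' s), le_max_left c₀ (θ₂ 1),
      le_max_right c₀ (θ₂ 1)]
  refine ⟨_, ⟨ξ, ξ', harc, hint, rfl⟩, ?_⟩
  calc ∫ s in (0 : ℝ)..T, L (ξ s) (ξ' s) ≤ ∫ _ in (0 : ℝ)..T, θ₂ 1 :=
        intervalIntegral.integral_mono_ae_restrict hT hint intervalIntegrable_const hle
    _ = θ₂ 1 * T := by simp [mul_comm]

lemma IsTonelli.neg_mul_le_fundSol (hL : IsTonelli L θ₁ θ₂ c₀) (ht : 0 ≤ t) (x y : E n) :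
    -c₀ * t ≤ fundSol L Ω t x y :=
  Real.le_sInf (fun _ hA => by simpa using le_of_mem_actionSet hL.neg_le ht hA)
    (by nlinarith [hL.c₀_pos])

lemma IsTonelli.fundSol_self_nonneg (hL : IsTonelli L θ₁ θ₂ c₀) (hc : critValue L Ω ≤ 0)
    (ht : 0 < t) (hx : x ∈ closure Ω) : 0 ≤ fundSol L Ω t x x := by
  have hbdd : BddBelow {v : ℝ | ∃ t : ℝ, 0 < t ∧ ∃ x ∈ closure Ω,
      v = (1 / t) * fundSol L Ω t x x} := by
    refine ⟨-c₀, ?_⟩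
    rintro _ ⟨s, hs, z, -, rfl⟩
    rw [one_div, inv_mul_eq_div, le_div_iff₀ hs]
    exact hL.neg_mul_le_fundSol hs.le z z
  have hmean : 0 ≤ (1 / t) * fundSol L Ω t x x :=
    (neg_nonpos.1 hc).trans (csInf_le hbdd ⟨t, ht, x, hx, rfl⟩)
  exact (mul_nonneg_iff_of_pos_left (by positivity)).1 hmean

end Action

section ManePotential

variable {L : E n → E n → ℝ} {θ₁ θ₂ : ℝ → ℝ} {c₀ C : ℝ} {Ω : Set (E n)} {x y z : E n}

lemma phiSet_add {A B : ℝ} (hA : A ∈ phiSet L Ω x y) (hB : B ∈ phiSet L Ω y z) :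
    A + B ∈ phiSet L Ω x z := by
  obtain ⟨t, ht, hA⟩ := hA
  obtain ⟨s, hs, hB⟩ := hB
  exact ⟨t + s, add_pos ht hs, actionSet_add ht.le hs.le hA hB⟩

lemma mul_mem_phiSet_self (hx : x ∈ closure Ω) {t : ℝ} (ht : 0 < t) :
    t * L x 0 ∈ phiSet L Ω x x :=
  ⟨t, ht, fun _ => x, fun _ => 0,
    ⟨intervalIntegrable_const, fun _ _ => by simp, fun _ _ => hx, rfl, rfl⟩,
    intervalIntegrable_const, by simp⟩

lemma IsTonelli.nonneg_of_mem_phiSet_self (hL : IsTonelli L θ₁ θ₂ c₀) (hc : critValue L Ω ≤ 0)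
    (hx : x ∈ closure Ω) {A : ℝ} (hA : A ∈ phiSet L Ω x x) : 0 ≤ A := by
  obtain ⟨t, ht, hA⟩ := hA
  exact (hL.fundSol_self_nonneg hc ht hx).trans (csInf_le (hL.bddBelow_actionSet ht.le) hA)

lemma IsTonelli.exists_mem_phiSet_le (hL : IsTonelli L θ₁ θ₂ c₀) (hq : IsQuasiconvex C Ω)
    (hx : x ∈ closure Ω) (hy : y ∈ closure Ω) (hxy : x ≠ y) :
    ∃ A ∈ phiSet L Ω x y, A ≤ θ₂ 1 * C * ‖x - y‖ := by
  obtain ⟨T, ξ, ξ', hT, hTC, harc, hunit⟩ := hq x hx y hy hxy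
  obtain ⟨A, hA, hAT⟩ := hL.exists_mem_actionSet_le ⟨hT.le, ξ, ξ', harc, hunit⟩
  refine ⟨A, ⟨T, hT, hA⟩, hAT.trans ?_⟩
  rw [mul_assoc]
  exact mul_le_mul_of_nonneg_left hTC (hL.sl₂.2.1 1 zero_le_one)

lemma IsTonelli.phiSet_nonempty (hL : IsTonelli L θ₁ θ₂ c₀) (hq : IsQuasiconvex C Ω)
    (hx : x ∈ closure Ω) (hy : y ∈ closure Ω) : (phiSet L Ω x y).Nonempty := by
  rcases eq_or_ne x y with rfl | hxy
  · exact ⟨_, mul_mem_phiSet_self hx one_pos⟩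
  · obtain ⟨A, hA, -⟩ := hL.exists_mem_phiSet_le hq hx hy hxy
    exact ⟨A, hA⟩

/-- Every path from `x` to `y` closes up to a loop, of nonnegative action, with a path back. -/
lemma IsTonelli.bddBelow_phiSet (hL : IsTonelli L θ₁ θ₂ c₀) (hc : critValue L Ω ≤ 0)
    (hq : IsQuasiconvex C Ω) (hx : x ∈ closure Ω) (hy : y ∈ closure Ω) :
    BddBelow (phiSet L Ω x y) := by
  obtain ⟨B, hB⟩ := hL.phiSet_nonempty hq hy hx
  exact ⟨-B, fun A hA => by linarith [hL.nonneg_of_mem_phiSet_self hc hx (phiSet_add hA hB)]⟩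

lemma IsTonelli.manePot_self (hL : IsTonelli L θ₁ θ₂ c₀) (hc : critValue L Ω ≤ 0)
    (hq : IsQuasiconvex C Ω) (hx : x ∈ closure Ω) : manePot L Ω x x = 0 := by
  refine le_antisymm ?_ (Real.sInf_nonneg fun _ => hL.nonneg_of_mem_phiSet_self hc hx)
  have hlim : Tendsto (fun t => t * L x 0) (𝓝[>] 0) (𝓝 0) := by
    simpa using ((continuous_mul_const (L x 0)).tendsto 0).mono_left nhdsWithin_le_nhds
  exact ge_of_tendsto hlim (eventually_mem_nhdsWithin.mono fun t ht =>
    csInf_le (hL.bddBelow_phiSet hc hq hx hx) (mul_mem_phiSet_self hx ht))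

lemma IsTonelli.manePot_le (hL : IsTonelli L θ₁ θ₂ c₀) (hc : critValue L Ω ≤ 0)
    (hq : IsQuasiconvex C Ω) (hx : x ∈ closure Ω) (hy : y ∈ closure Ω) :
    manePot L Ω x y ≤ θ₂ 1 * C * ‖x - y‖ := by
  rcases eq_or_ne x y with rfl | hxy
  · simp [hL.manePot_self hc hq hx]
  · obtain ⟨A, hA, hAle⟩ := hL.exists_mem_phiSet_le hq hx hy hxy
    exact (csInf_le (hL.bddBelow_phiSet hc hq hx hy) hA).trans hAle

lemma IsTonelli.manePot_triangle (hL : IsTonelli L θ₁ θ₂ c₀) (hc : critValue L Ω ≤ 0)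
    (hq : IsQuasiconvex C Ω) (hx : x ∈ closure Ω) (hy : y ∈ closure Ω) (hz : z ∈ closure Ω) :
    manePot L Ω x z ≤ manePot L Ω x y + manePot L Ω y z := by
  rw [manePot, manePot, manePot, ← csInf_add (hL.phiSet_nonempty hq hx hy)
    (hL.bddBelow_phiSet hc hq hx hy) (hL.phiSet_nonempty hq hy hz)
    (hL.bddBelow_phiSet hc hq hy hz)]
  exact csInf_le_csInf (hL.bddBelow_phiSet hc hq hx hz)
    ((hL.phiSet_nonempty hq hx hy).add (hL.phiSet_nonempty hq hy hz))
    (Set.add_subset_iff.2 fun _ hA _ hB => phiSet_add hA hB)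

end ManePotential

section InfConvolution

variable {α : Type*} {Φ : α → α → ℝ} {g : α → ℝ} {K B : Set α} {x x' y₀ : α}

/-- For `Φ = manePot L Ω` and `B = frontier Ω` this is `valueFun L Ω g`. -/
def infConv (Φ : α → α → ℝ) (g : α → ℝ) (B : Set α) (x : α) : ℝ :=
  sInf ((fun y => g y + Φ y x) '' B)

variable (hBK : B ⊆ K) (htri : ∀ x ∈ K, ∀ y ∈ K, ∀ z ∈ K, Φ x z ≤ Φ x y + Φ y z)
  (hg : ∀ x ∈ B, ∀ y ∈ B, g x - g y ≤ Φ y x)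
include hBK htri hg

lemma bddBelow_infConv (hy₀ : y₀ ∈ B) (hx : x ∈ K) : BddBelow ((fun y => g y + Φ y x) '' B) := by
  refine ⟨g y₀ - Φ x y₀, ?_⟩
  rintro _ ⟨y, hy, rfl⟩
  linarith [hg y₀ hy₀ y hy, htri y (hBK hy) x hx y₀ (hBK hy₀)]

lemma infConv_sub_le (hB : B.Nonempty) (hx : x ∈ K) (hx' : x' ∈ K) :
    infConv Φ g B x' - infConv Φ g B x ≤ Φ x x' := by
  obtain ⟨y₀, hy₀⟩ := hB
  rw [sub_le_comm, infConv]
  refine le_csInf ⟨_, mem_image_of_mem _ hy₀⟩ ?_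
  rintro _ ⟨y, hy, rfl⟩
  dsimp only
  linarith [csInf_le (bddBelow_infConv hBK htri hg hy₀ hx') (mem_image_of_mem _ hy),
    htri y (hBK hy) x hx x' hx']

lemma infConv_eq_of_mem (hself : ∀ x ∈ B, Φ x x ≤ 0) (hx : x ∈ B) : infConv Φ g B x = g x := by
  rw [infConv]
  refine le_antisymm ?_ (le_csInf ⟨_, mem_image_of_mem _ hx⟩ ?_)
  · linarith [csInf_le (bddBelow_infConv hBK htri hg hx (hBK hx)) (mem_image_of_mem _ hx),
      hself x hx]
  · rintro _ ⟨y, hy, rfl⟩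
    linarith [hg x hx y hy]

end InfConvolution

/-- under (SH), the value function is dominated by `L`,
Lipschitz on `cl Ω`, and attains the boundary datum. -/
theorem value_function_dominated_lipschitz_boundary
    {n : ℕ} (Ω : Set (E n)) (L : E n → E n → ℝ) (θ₁ θ₂ : ℝ → ℝ) (c₀ : ℝ) (g : E n → ℝ)
    (hΩo : IsOpen Ω) (hΩc : IsConnected Ω) (hΩb : IsBounded Ω)
    (hΩl : HasLipschitzBoundary Ω) (hL : IsTonelli L θ₁ θ₂ c₀)
    (hg : ∀ x ∈ frontier Ω, ∀ y ∈ frontier Ω, g x - g y ≤ manePot L Ω y x)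
    (hc : critValue L Ω ≤ 0) :
    (∀ x ∈ closure Ω, ∀ x' ∈ closure Ω,
      valueFun L Ω g x' - valueFun L Ω g x ≤ manePot L Ω x x') ∧
    (∃ K : ℝ≥0, LipschitzOnWith K (valueFun L Ω g) (closure Ω)) ∧
    (∀ x ∈ frontier Ω, valueFun L Ω g x = g x) := by
  obtain ⟨C, hq⟩ := hΩl.exists_isQuasiconvex hΩo hΩc hΩb
  have htri : ∀ x ∈ closure Ω, ∀ y ∈ closure Ω, ∀ z ∈ closure Ω,
      manePot L Ω x z ≤ manePot L Ω x y + manePot L Ω y z :=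
    fun x hx y hy z hz => hL.manePot_triangle hc hq hx hy hz
  have hdom : ∀ x ∈ closure Ω, ∀ x' ∈ closure Ω,
      valueFun L Ω g x' - valueFun L Ω g x ≤ manePot L Ω x x' := by
    rcases (frontier Ω).eq_empty_or_nonempty with hfr | hfr
    · intro x hx x' _
      obtain rfl := (subsingleton_of_frontier_eq_empty hΩb hΩc.nonempty hfr).elim x x'
      rw [sub_self, hL.manePot_self hc hq hx]
    · exact fun x hx x' hx' => infConv_sub_le frontier_subset_closure htri hg hfr hx hx'
  refine ⟨hdom, ⟨(θ₂ 1 * C).toNNReal, .of_le_add_mul _ fun x hx y hy => ?_⟩, fun x hx => ?_⟩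
  · rw [dist_comm, dist_eq_norm]
    linarith [hdom y hy x hx, hL.manePot_le hc hq hy hx,
      mul_le_mul_of_nonneg_right (Real.le_coe_toNNReal (θ₂ 1 * C)) (norm_nonneg (y - x))]
  · exact infConv_eq_of_mem frontier_subset_closure htri hg
      (fun y hy => (hL.manePot_self hc hq (frontier_subset_closure hy)).le) hx

end HJpaper
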